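/- arXiv:1709.01995 — 6 statements merged into one kernel-verified Lean document; each statement's English description precedes it below -/
import Mathlib

section
/- Let a and b be integer linear recurrence sequences of order 2 with a_0 = b_0 = 0, a_1 = b_1 = 1, satisfying a_{n+2} = h1*a_{n+1} - k1*a_n and b_{n+2} = h2*b_{n+1} - k2*b_n. Then the product sequence c_n = a_n * b_n satisfies the order-4 linear recurrence with characteristic polynomial x^4 - p x^3 + (q + 2r) x^2 - p r x + r^2, where p = h1*h2, q = h1^2*k2 + k1*(h2^2 - 4*k2), and r = k1*k2. -/
/-!
If `α₁, α₂` and `β₁, β₂` are the roots of `x² - h₁x + k₁` and `x² - h₂x + k₂`, then `aₙbₙ` is a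
combination of the powers `(αᵢβⱼ)ⁿ`, and `∏ (x - αᵢβⱼ) = x⁴ - p x³ + (q + 2r) x² - p r x + r²`.
Without leaving the ring of coefficients: every `a (n + j)` is a linear combination of `a n` and
`a (n + 1)`, and likewise for `b`, so the order-4 recurrence becomes a polynomial identity in
`a n, a (n + 1), b n, b (n + 1)` and the parameters.
-/

section LinearRecurrence

variable {R : Type*} [CommRing R] {h k : R} {a : ℕ → R}

theorem recurrence_add_three (ha : ∀ n, a (n + 2) = h * a (n + 1) - k * a n) (n : ℕ) :
    a (n + 3) = (h ^ 2 - k) * a (n + 1) - h * k * a n := by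
  rw [ha (n + 1), ha n]
  ring

theorem recurrence_add_four (ha : ∀ n, a (n + 2) = h * a (n + 1) - k * a n) (n : ℕ) :
    a (n + 4) = (h ^ 3 - 2 * h * k) * a (n + 1) - (h ^ 2 * k - k ^ 2) * a n := by
  rw [ha (n + 2), recurrence_add_three ha, ha n]
  ring

theorem mul_recurrence_order_four {h₁ k₁ h₂ k₂ : R} {a b : ℕ → R}
    (ha : ∀ n, a (n + 2) = h₁ * a (n + 1) - k₁ * a n)
    (hb : ∀ n, b (n + 2) = h₂ * b (n + 1) - k₂ * b n) (n : ℕ) :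
    a (n + 4) * b (n + 4) = h₁ * h₂ * (a (n + 3) * b (n + 3))
      - (h₁ ^ 2 * k₂ + k₁ * (h₂ ^ 2 - 4 * k₂) + 2 * (k₁ * k₂)) * (a (n + 2) * b (n + 2))
      + h₁ * h₂ * (k₁ * k₂) * (a (n + 1) * b (n + 1)) - (k₁ * k₂) ^ 2 * (a n * b n) := by
  rw [recurrence_add_four ha, recurrence_add_four hb, recurrence_add_three ha,
    recurrence_add_three hb, ha n, hb n]
  ring

end LinearRecurrence

theorem product_of_lucas_satisfies_standard_order4_recurrence_general
    (h1 k1 h2 k2 : ℤ) (a b : ℕ → ℤ)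
    (ha : ∀ n, a (n + 2) = h1 * a (n + 1) - k1 * a n)
    (hb : ∀ n, b (n + 2) = h2 * b (n + 1) - k2 * b n)
    (c : ℕ → ℤ) (hc : ∀ n, c n = a n * b n)
    (p q r : ℤ)
    (hp : p = h1 * h2) (hq : q = h1 ^ 2 * k2 + k1 * (h2 ^ 2 - 4 * k2))
    (hr : r = k1 * k2) :
    ∀ n, c (n + 4) = p * c (n + 3) - (q + 2 * r) * c (n + 2)
      + p * r * c (n + 1) - r ^ 2 * c n := by
  intro n
  simp only [hc, hp, hq, hr]
  exact mul_recurrence_order_four ha hb n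

theorem product_of_lucas_satisfies_standard_order4_recurrence
    (h1 k1 h2 k2 : ℤ) (a b : ℕ → ℤ)
    (ha0 : a 0 = 0) (ha1 : a 1 = 1)
    (hb0 : b 0 = 0) (hb1 : b 1 = 1)
    (ha : ∀ n, a (n + 2) = h1 * a (n + 1) - k1 * a n)
    (hb : ∀ n, b (n + 2) = h2 * b (n + 1) - k2 * b n)
    (c : ℕ → ℤ) (hc : ∀ n, c n = a n * b n)
    (p q r : ℤ)
    (hp : p = h1 * h2) (hq : q = h1 ^ 2 * k2 + k1 * (h2 ^ 2 - 4 * k2))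
    (hr : r = k1 * k2) :
    ∀ n, c (n + 4) = p * c (n + 3) - (q + 2 * r) * c (n + 2)
      + p * r * c (n + 1) - r ^ 2 * c n :=
  product_of_lucas_satisfies_standard_order4_recurrence_general h1 k1 h2 k2 a b ha hb c hc p q r hp
    hq hr
end

section
/- Let f(x) and g(x) be monic polynomials over a field with companion matrices F and G. If a sequence (a_n) satisfies the recurrence associated to f and (b_n) satisfies the recurrence associated to g, then the product sequence (a_n * b_n) satisfies the linear recurrence whose characteristic polynomial is the characteristic polynomial of the Kronecker product F ⊗ G. -/
/-!
Write `w_a n = (a n, …, a (n + d - 1))` for the window of a sequence. The recurrence of `f` says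
exactly `w_a (n + 1) = w_a n ᵥ* F` for the companion matrix `F`, and likewise for `b` and `G`.
Hence the vectors `w_a n ⊗ w_b n`, whose first entry is `a n * b n`, evolve by `F ⊗ G`. By
Cayley–Hamilton, every coordinate of a vector sequence with `v (n + 1) = v n ᵥ* M` satisfies the
recurrence whose characteristic polynomial is that of `M`.
-/

open Polynomial Matrix Kronecker

/-- The companion matrix of a monic polynomial `f` of degree `d` (last column
contains the negated low-order coefficients). -/
def companionMatrix {K : Type*} [Field K] (f : K[X]) :
    Matrix (Fin f.natDegree) (Fin f.natDegree) K :=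
  fun i j => if (j : ℕ) = f.natDegree - 1 then -f.coeff i
    else if (i : ℕ) = (j : ℕ) + 1 then 1 else 0

/-- A sequence satisfies the linear recurrence associated to the monic
polynomial `f = x^d - c_{d-1} x^{d-1} - ⋯ - c_0`, i.e.
`a (n+d) = c_{d-1} a (n+d-1) + ⋯ + c_0 a n`. -/
def SatisfiesLinearRec {K : Type*} [Field K] (f : K[X]) (a : ℕ → K) : Prop :=
  ∀ n : ℕ, a (n + f.natDegree) =
    ∑ i : Fin f.natDegree, (-(f.coeff i)) * a (n + i)

open Finset

namespace Matrix

variable {ι R : Type*} [Fintype ι] [DecidableEq ι]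

theorem vecMul_pow_of_succ_eq_vecMul [Semiring R] {M : Matrix ι ι R} {v : ℕ → ι → R}
    (hv : ∀ n, v (n + 1) = v n ᵥ* M) (n k : ℕ) : v (n + k) = v n ᵥ* M ^ k := by
  induction k with
  | zero => simp
  | succ k ih => rw [← add_assoc, hv, ih, vecMul_vecMul, pow_succ]

theorem sum_coeff_smul_eq_zero_of_aeval_eq_zero [CommSemiring R] {M : Matrix ι ι R}
    {v : ℕ → ι → R} (hv : ∀ n, v (n + 1) = v n ᵥ* M) {p : R[X]} (hp : aeval M p = 0) (n : ℕ) :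
    ∑ k ∈ range (p.natDegree + 1), p.coeff k • v (n + k) = 0 := by
  simp_rw [vecMul_pow_of_succ_eq_vecMul hv n, ← vecMul_smul, ← vecMul_sum, ← aeval_eq_sum_range,
    hp, vecMul_zero]

end Matrix

section

variable {K : Type*} [Field K]

theorem satisfiesLinearRec_zero (p : K[X]) : SatisfiesLinearRec p 0 := by
  intro n
  simp

theorem SatisfiesLinearRec.eq_zero_of_natDegree_eq_zero {f : K[X]} {a : ℕ → K}
    (ha : SatisfiesLinearRec f a) (hf : f.natDegree = 0) (n : ℕ) : a n = 0 := by
  have := ha n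
  rw [Fin.sum_univ_eq_sum_range (fun i => -f.coeff i * a (n + i)), hf] at this
  simpa [hf] using this

theorem SatisfiesLinearRec.of_sum_coeff_mul_eq_zero {p : K[X]} (hp : p.Monic) {u : ℕ → K}
    (h : ∀ n, ∑ k ∈ range (p.natDegree + 1), p.coeff k * u (n + k) = 0) :
    SatisfiesLinearRec p u := by
  intro n
  have := h n
  rw [sum_range_succ, hp.coeff_natDegree, one_mul,
    ← Fin.sum_univ_eq_sum_range (fun k => p.coeff k * u (n + k))] at this
  simp only [neg_mul, sum_neg_distrib]
  exact eq_neg_of_add_eq_zero_right this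

theorem satisfiesLinearRec_charpoly_of_succ_eq_vecMul {ι : Type*} [Fintype ι] [DecidableEq ι]
    {M : Matrix ι ι K} {v : ℕ → ι → K} (hv : ∀ n, v (n + 1) = v n ᵥ* M) (q : ι) :
    SatisfiesLinearRec M.charpoly (fun n => v n q) :=
  .of_sum_coeff_mul_eq_zero M.charpoly_monic fun n => by
    simpa using congrFun (sum_coeff_smul_eq_zero_of_aeval_eq_zero hv (aeval_self_charpoly M) n) q

def window (a : ℕ → K) (d n : ℕ) : Fin d → K := fun i => a (n + i)

theorem SatisfiesLinearRec.window_succ {f : K[X]} {a : ℕ → K} (ha : SatisfiesLinearRec f a)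
    (n : ℕ) : window a f.natDegree (n + 1) = window a f.natDegree n ᵥ* companionMatrix f := by
  ext i
  simp only [window, vecMul, dotProduct, companionMatrix]
  by_cases hi : (i : ℕ) = f.natDegree - 1
  · simp only [hi, if_true]
    rw [show n + 1 + (f.natDegree - 1) = n + f.natDegree by omega, ha n]
    exact sum_congr rfl fun j _ => mul_comm _ _
  · have hnext : (i : ℕ) + 1 < f.natDegree := by omega
    rw [sum_eq_single ⟨i + 1, hnext⟩]
    · simp [hi, add_assoc, add_comm 1 (i : ℕ)]
    · intro j _ hj
      have hj' : (j : ℕ) ≠ i + 1 := fun h => hj (Fin.ext h)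
      simp [hi, hj']
    · simp

end

theorem product_satisfies_kronecker_charpoly_recurrence_general
    {K : Type*} [Field K] (f g : K[X])
    (a b : ℕ → K)
    (ha : SatisfiesLinearRec f a) (hb : SatisfiesLinearRec g b) :
    SatisfiesLinearRec ((companionMatrix f ⊗ₖ companionMatrix g).charpoly)
      (fun n => a n * b n) := by
  obtain hf | hf := f.natDegree.eq_zero_or_pos
  · convert satisfiesLinearRec_zero _ using 2 with n
    simp [ha.eq_zero_of_natDegree_eq_zero hf n]
  obtain hg | hg := g.natDegree.eq_zero_or_pos
  · convert satisfiesLinearRec_zero _ using 2 with n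
    simp [hb.eq_zero_of_natDegree_eq_zero hg n]
  -- `vec (vecMulVec w_b w_a)` is the Kronecker product `w_a ⊗ w_b`, indexed by pairs `(i, j)`.
  set v := fun n => vec (vecMulVec (window b g.natDegree n) (window a f.natDegree n))
  have hstep : ∀ n, v (n + 1) = v n ᵥ* (companionMatrix f ⊗ₖ companionMatrix g) := fun n => by
    rw [vec_vecMul_kronecker, mul_vecMulVec, vecMulVec_mul, mulVec_transpose, ← ha.window_succ,
      ← hb.window_succ]
  simpa [v, window, vecMulVec_apply, mul_comm] using
    satisfiesLinearRec_charpoly_of_succ_eq_vecMul hstep ((⟨0, hf⟩, ⟨0, hg⟩) : Fin _ × Fin _)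

theorem product_satisfies_kronecker_charpoly_recurrence
    {K : Type*} [Field K] (f g : K[X]) (hf : f.Monic) (hg : g.Monic)
    (a b : ℕ → K)
    (ha : SatisfiesLinearRec f a) (hb : SatisfiesLinearRec g b) :
    SatisfiesLinearRec ((companionMatrix f ⊗ₖ companionMatrix g).charpoly)
      (fun n => a n * b n) :=
  product_satisfies_kronecker_charpoly_recurrence_general f g a b ha hb
end

section
/- Let α, β, γ, δ be the (distinct, nonzero) roots of the characteristic polynomial x^4 - p x^3 + s x^2 - u x + v of a sequence. The polynomial has the form x^4 - p x^3 + (q + 2r) x^2 - p r x + r^2 for some q, r (with r^2 = v) if and only if the roots can be paired so that α δ = β γ with αδ = r (after suitable labeling). -/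
/-!
Writing `s = q + 2r`, `u = pr`, `v = r²` and choosing `a + b = p`, `ab = q`, the quartic factors as
`(X² - aX + r)(X² - bX + r)`; each factor contributes two roots with product `r`. Conversely, if
`α'δ' = β'γ' = r`, grouping the linear factors in these pairs gives a factorization of the same
shape, and comparing coefficients yields `q = (α' + δ')(β' + γ')`.
-/

open Polynomial

namespace Polynomial

section CommRing

variable {R : Type*} [CommRing R]

theorem X_sub_C_mul_X_sub_C (y z : R) :
    (X - C y) * (X - C z) = X ^ 2 - C (y + z) * X + C (y * z) := by
  simp only [map_add, map_mul]; ring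

theorem quadratic_mul_quadratic_of_eq_const (a b r : R) :
    (X ^ 2 - C a * X + C r) * (X ^ 2 - C b * X + C r) =
      X ^ 4 - C (a + b) * X ^ 3 + C (a * b + 2 * r) * X ^ 2 - C ((a + b) * r) * X + C (r ^ 2) := by
  simp only [map_add, map_mul, map_pow, map_ofNat]; ring

theorem quartic_coeffs_eq {p s u v p' s' u' v' : R}
    (h : X ^ 4 - C p * X ^ 3 + C s * X ^ 2 - C u * X + C v =
      X ^ 4 - C p' * X ^ 3 + C s' * X ^ 2 - C u' * X + C v') :
    p = p' ∧ s = s' ∧ u = u' ∧ v = v' := by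
  refine ⟨?_, ?_, ?_, ?_⟩
  · simpa using congrArg (coeff · 3) h
  · simpa using congrArg (coeff · 2) h
  · simpa using congrArg (coeff · 1) h
  · simpa using congrArg (coeff · 0) h

theorem prod_multiset_X_sub_C_insert4 (a b c d : R) :
    (({a, b, c, d} : Multiset R).map (X - C ·)).prod =
      (X - C a) * (X - C b) * (X - C c) * (X - C d) := by
  simp only [Multiset.insert_eq_cons, Multiset.map_cons, Multiset.prod_cons,
    Multiset.map_singleton, Multiset.prod_singleton]
  ring

end CommRing

end Polynomial

theorem IsAlgClosed.exists_add_eq_and_mul_eq {K : Type*} [Field K] [IsAlgClosed K] (a r : K) :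
    ∃ y z : K, y + z = a ∧ y * z = r := by
  have hdeg : (X ^ 2 - C a * X + C r).degree = 2 := by compute_degree!
  obtain ⟨y, hy⟩ := IsAlgClosed.exists_root _ (hdeg ▸ two_ne_zero)
  refine ⟨y, a - y, by ring, ?_⟩
  simp only [IsRoot, eval_add, eval_sub, eval_mul, eval_pow, eval_X, eval_C] at hy
  linear_combination -hy

theorem paired_roots_of_standard_quartic {K : Type*} [Field K] [IsAlgClosed K]
    {α β γ δ p s u v q r : K}
    (hfact : (X - C α) * (X - C β) * (X - C γ) * (X - C δ) =
      X ^ 4 - C p * X ^ 3 + C s * X ^ 2 - C u * X + C v)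
    (hs : s = q + 2 * r) (hu : u = p * r) (hv : v = r ^ 2) :
    ∃ α' β' γ' δ' : K, ({α, β, γ, δ} : Multiset K) = {α', β', γ', δ'} ∧
      α' * δ' = r ∧ β' * γ' = r := by
  obtain ⟨a, b, hab, hab'⟩ := IsAlgClosed.exists_add_eq_and_mul_eq p q
  obtain ⟨y, z, hyz, hyz'⟩ := IsAlgClosed.exists_add_eq_and_mul_eq a r
  obtain ⟨w, t, hwt, hwt'⟩ := IsAlgClosed.exists_add_eq_and_mul_eq b r
  have hsplit : (X - C α) * (X - C β) * (X - C γ) * (X - C δ) =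
      (X - C y) * (X - C w) * (X - C t) * (X - C z) :=
    calc _ = (X ^ 2 - C a * X + C r) * (X ^ 2 - C b * X + C r) := by
          rw [hfact, quadratic_mul_quadratic_of_eq_const, hab, hab', hs, hu, hv]
      _ = ((X - C y) * (X - C z)) * ((X - C w) * (X - C t)) := by
          rw [X_sub_C_mul_X_sub_C, X_sub_C_mul_X_sub_C, hyz, hyz', hwt, hwt']
      _ = _ := by ring
  refine ⟨y, w, t, z, ?_, hyz', hwt'⟩
  simpa only [← prod_multiset_X_sub_C_insert4, roots_multiset_prod_X_sub_C]
    using congrArg roots hsplit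

theorem standard_quartic_of_paired_roots {R : Type*} [CommRing R]
    {α β γ δ α' β' γ' δ' p s u v : R}
    (hfact : (X - C α) * (X - C β) * (X - C γ) * (X - C δ) =
      X ^ 4 - C p * X ^ 3 + C s * X ^ 2 - C u * X + C v)
    (hroots : ({α, β, γ, δ} : Multiset R) = {α', β', γ', δ'}) (hpair : α' * δ' = β' * γ') :
    s = (α' + δ') * (β' + γ') + 2 * (α' * δ') ∧ u = p * (α' * δ') ∧ v = (α' * δ') ^ 2 := by
  have hquartic : X ^ 4 - C p * X ^ 3 + C s * X ^ 2 - C u * X + C v =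
      X ^ 4 - C ((α' + δ') + (β' + γ')) * X ^ 3 + C ((α' + δ') * (β' + γ') + 2 * (α' * δ')) * X ^ 2
        - C (((α' + δ') + (β' + γ')) * (α' * δ')) * X + C ((α' * δ') ^ 2) :=
    calc _ = (X - C α') * (X - C β') * (X - C γ') * (X - C δ') := by
          rw [← hfact, ← prod_multiset_X_sub_C_insert4, ← prod_multiset_X_sub_C_insert4, hroots]
      _ = ((X - C α') * (X - C δ')) * ((X - C β') * (X - C γ')) := by ring
      _ = _ := by
          rw [X_sub_C_mul_X_sub_C, X_sub_C_mul_X_sub_C, ← hpair,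
            quadratic_mul_quadratic_of_eq_const]
  obtain ⟨hp, hs, hu, hv⟩ := quartic_coeffs_eq hquartic
  exact ⟨hs, hp ▸ hu, hv⟩

theorem standard_polynomial_iff_paired_roots_general
    (α β γ δ p s u v : ℂ)
    (hfact : (X - C α) * (X - C β) * (X - C γ) * (X - C δ) =
      X ^ 4 - C p * X ^ 3 + C s * X ^ 2 - C u * X + C v) :
    (∃ q r : ℂ, s = q + 2 * r ∧ u = p * r ∧ v = r ^ 2) ↔
      ∃ α' β' γ' δ' : ℂ,
        ({α, β, γ, δ} : Multiset ℂ) = {α', β', γ', δ'} ∧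
        α' * δ' = β' * γ' ∧
        ∃ r : ℂ, α' * δ' = r ∧ r ^ 2 = v := by
  constructor
  · rintro ⟨q, r, hs, hu, hv⟩
    obtain ⟨α', β', γ', δ', hroots, hαδ, hβγ⟩ := paired_roots_of_standard_quartic hfact hs hu hv
    exact ⟨α', β', γ', δ', hroots, hαδ.trans hβγ.symm, r, hαδ, hv.symm⟩
  · rintro ⟨α', β', γ', δ', hroots, hpair, -⟩
    exact ⟨_, _, standard_quartic_of_paired_roots hfact hroots hpair⟩

theorem standard_polynomial_iff_paired_roots
    (α β γ δ p s u v : ℂ)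
    (hdist : α ≠ β ∧ α ≠ γ ∧ α ≠ δ ∧ β ≠ γ ∧ β ≠ δ ∧ γ ≠ δ)
    (hnz : α ≠ 0 ∧ β ≠ 0 ∧ γ ≠ 0 ∧ δ ≠ 0)
    (hfact : (X - C α) * (X - C β) * (X - C γ) * (X - C δ) =
      X ^ 4 - C p * X ^ 3 + C s * X ^ 2 - C u * X + C v) :
    (∃ q r : ℂ, s = q + 2 * r ∧ u = p * r ∧ v = r ^ 2) ↔
      ∃ α' β' γ' δ' : ℂ,
        ({α, β, γ, δ} : Multiset ℂ) = {α', β', γ', δ'} ∧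
        α' * δ' = β' * γ' ∧
        ∃ r : ℂ, α' * δ' = r ∧ r ^ 2 = v :=
  standard_polynomial_iff_paired_roots_general α β γ δ p s u v hfact
end

section
/- Let p, q, r be complex numbers with r ≠ 0 and p ≠ 0. Define h1 = √(k1) * (√(q+4r+2p√r) ± √(q+4r-2p√r))/(2√r), h2 = (√(q+4r+2p√r) ∓ √(q+4r-2p√r))/(2√(k1)) (for a suitable choice of square roots), k2 = r/k1. Then k1 k2 = r, h1 h2 = p, and h1^2 k2 + h2^2 k1 = q + 4r. -/
/-! With `u = (s1 + s2) / 2` and `v = (s1 - s2) / 2` one has `u * v = p * sr` and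
`u ^ 2 + v ^ 2 = q + 4 * r`; the parameters `h1 = sk1 * u / sr`, `h2 = v / sk1` and `k2 = r / k1`
rescale `u` and `v` so that the factors `sk1` and `sr` cancel in both identities. -/

section

variable {K : Type*} [Field K] [NeZero (2 : K)] {c p s1 s2 sr sk1 : K}

theorem half_add_mul_half_sub_of_sq_eq (hs1 : s1 ^ 2 = c + 2 * p * sr)
    (hs2 : s2 ^ 2 = c - 2 * p * sr) : (s1 + s2) / 2 * ((s1 - s2) / 2) = p * sr := by
  field_simp
  linear_combination hs1 - hs2

theorem half_add_sq_add_half_sub_sq_of_sq_eq (hs1 : s1 ^ 2 = c + 2 * p * sr)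
    (hs2 : s2 ^ 2 = c - 2 * p * sr) : ((s1 + s2) / 2) ^ 2 + ((s1 - s2) / 2) ^ 2 = c := by
  field_simp
  linear_combination 2 * hs1 + 2 * hs2

theorem rescaled_mul_eq (hsr : sr ≠ 0) (hsk1 : sk1 ≠ 0) (hs1 : s1 ^ 2 = c + 2 * p * sr)
    (hs2 : s2 ^ 2 = c - 2 * p * sr) :
    sk1 * (s1 + s2) / (2 * sr) * ((s1 - s2) / (2 * sk1)) = p := by
  calc sk1 * (s1 + s2) / (2 * sr) * ((s1 - s2) / (2 * sk1))
      = (s1 + s2) / 2 * ((s1 - s2) / 2) / sr := by field_simp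
    _ = p := by rw [half_add_mul_half_sub_of_sq_eq hs1 hs2, mul_div_cancel_right₀ p hsr]

theorem rescaled_sq_mul_add_sq_mul_eq (hsr : sr ≠ 0) (hsk1 : sk1 ≠ 0)
    (hs1 : s1 ^ 2 = c + 2 * p * sr) (hs2 : s2 ^ 2 = c - 2 * p * sr) :
    (sk1 * (s1 + s2) / (2 * sr)) ^ 2 * (sr ^ 2 / sk1 ^ 2) + ((s1 - s2) / (2 * sk1)) ^ 2 * sk1 ^ 2
      = c := by
  calc (sk1 * (s1 + s2) / (2 * sr)) ^ 2 * (sr ^ 2 / sk1 ^ 2)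
        + ((s1 - s2) / (2 * sk1)) ^ 2 * sk1 ^ 2
      = ((s1 + s2) / 2) ^ 2 + ((s1 - s2) / 2) ^ 2 := by field_simp
    _ = c := half_add_sq_add_half_sub_sq_of_sq_eq hs1 hs2

end

theorem standard_factorization_parameters_general
    (p q r k1 k2 h1 h2 s1 s2 sr sk1 : ℂ)
    (hr : r ≠ 0) (hk1 : k1 ≠ 0)
    (hsr : sr ^ 2 = r) (hsk1 : sk1 ^ 2 = k1)
    (hs1 : s1 ^ 2 = q + 4 * r + 2 * p * sr)
    (hs2 : s2 ^ 2 = q + 4 * r - 2 * p * sr)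
    (hh1 : h1 = sk1 * (s1 + s2) / (2 * sr))
    (hh2 : h2 = (s1 - s2) / (2 * sk1))
    (hk2 : k2 = r / k1) :
    k1 * k2 = r ∧ h1 * h2 = p ∧ h1 ^ 2 * k2 + h2 ^ 2 * k1 = q + 4 * r := by
  have hsr0 : sr ≠ 0 := ne_zero_pow two_ne_zero (hsr ▸ hr)
  have hsk0 : sk1 ≠ 0 := ne_zero_pow two_ne_zero (hsk1 ▸ hk1)
  subst hh1 hh2 hk2 hsr hsk1
  exact ⟨mul_div_cancel₀ _ hk1, rescaled_mul_eq hsr0 hsk0 hs1 hs2,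
    rescaled_sq_mul_add_sq_mul_eq hsr0 hsk0 hs1 hs2⟩

theorem standard_factorization_parameters
    (p q r k1 k2 h1 h2 s1 s2 sr sk1 : ℂ)
    (hr : r ≠ 0) (hp : p ≠ 0) (hk1 : k1 ≠ 0)
    (hsr : sr ^ 2 = r) (hsk1 : sk1 ^ 2 = k1)
    (hs1 : s1 ^ 2 = q + 4 * r + 2 * p * sr)
    (hs2 : s2 ^ 2 = q + 4 * r - 2 * p * sr)
    (hh1 : h1 = sk1 * (s1 + s2) / (2 * sr))
    (hh2 : h2 = (s1 - s2) / (2 * sk1))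
    (hk2 : k2 = r / k1) :
    k1 * k2 = r ∧ h1 * h2 = p ∧ h1 ^ 2 * k2 + h2 ^ 2 * k1 = q + 4 * r :=
  standard_factorization_parameters_general p q r k1 k2 h1 h2 s1 s2 sr sk1 hr hk1 hsr hsk1 hs1 hs2
    hh1 hh2 hk2
end

section
/- Let t ≥ 6 be an integer and let α = (1/4)(t + √((t-4)t+8) + √2 · √(t(t + √((t-4)t+8) - 2) - 4)). Then α is a root of x^4 - t x^3 + t x^2 - t x + 1 and α > 1, while the other roots of this polynomial are α^{-1} and a pair of complex conjugates of absolute value 1. -/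
/-!
The quartic is the product of the reciprocal quadratics `x² - s x + 1` and `x² - s' x + 1`, where
`s + s' = t` and `s s' = t - 2`, i.e. `s, s' = (t ± √((t - 4) t + 8)) / 2`. As `s > 2`, the first
factor has the real roots `α = (s + √(s² - 4)) / 2 > 1` and `α⁻¹`, and `α` is the stated formula;
as `|s'| < 2`, the second factor has a pair of conjugate roots on the unit circle.
-/

open Polynomial ComplexConjugate

theorem reciprocal_quartic_eq_mul {R : Type*} [CommRing R] (x s s' : R) :
    x ^ 4 - (s + s') * x ^ 3 + (s * s' + 2) * x ^ 2 - (s + s') * x + 1 =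
      (x ^ 2 - s * x + 1) * (x ^ 2 - s' * x + 1) := by
  ring

theorem X_sub_C_mul_X_sub_C_of_mul_eq_one {R : Type*} [CommRing R] {a b : R} (h : a * b = 1) :
    (X - C a) * (X - C b) = X ^ 2 - C (a + b) * X + 1 := by
  have hC : C a * C b = 1 := by rw [← C_mul, h, C_1]
  rw [C_add]
  linear_combination hC

theorem roots_reciprocal_quartic {R : Type*} [CommRing R] [IsDomain R] {a b c d p q : R}
    (hab : a * b = 1) (hcd : c * d = 1) (hp : a + b + (c + d) = p)
    (hq : (a + b) * (c + d) + 2 = q) :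
    (X ^ 4 - C p * X ^ 3 + C q * X ^ 2 - C p * X + 1 : R[X]).roots = {a, b, c, d} := by
  have hfactor : (X ^ 4 - C p * X ^ 3 + C q * X ^ 2 - C p * X + 1 : R[X]) =
      (({a, b, c, d} : Multiset R).map (fun r => X - C r)).prod := by
    simp only [Multiset.insert_eq_cons, Multiset.map_cons, Multiset.map_singleton,
      Multiset.prod_cons, Multiset.prod_singleton]
    rw [← mul_assoc, X_sub_C_mul_X_sub_C_of_mul_eq_one hab, X_sub_C_mul_X_sub_C_of_mul_eq_one hcd,
      ← reciprocal_quartic_eq_mul, ← hp, ← hq]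
    simp only [map_add, map_mul, map_ofNat]
  rw [hfactor, roots_multiset_prod_X_sub_C]

theorem add_inv_eq_of_sq_sub_mul_add_one_eq_zero {K : Type*} [Field K] {x s : K}
    (h : x ^ 2 - s * x + 1 = 0) : x + x⁻¹ = s := by
  have hx : x ≠ 0 := by rintro rfl; simp at h
  field_simp
  linear_combination h

section ReciprocalQuadratic

variable {s : ℝ}

theorem sq_sub_mul_add_one_eq_zero_of_eq_add_sqrt {α : ℝ} (hs : 4 ≤ s ^ 2)
    (hα : α = (s + √(s ^ 2 - 4)) / 2) : α ^ 2 - s * α + 1 = 0 := by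
  subst hα
  linear_combination (1 / 4 : ℝ) * Real.sq_sqrt (sub_nonneg.2 hs)

theorem one_lt_add_sqrt_sq_sub_four_div_two (hs : 2 < s) : 1 < (s + √(s ^ 2 - 4)) / 2 := by
  linarith [Real.sqrt_nonneg (s ^ 2 - 4)]

theorem exists_norm_eq_one_add_conj_eq (hs : |s| < 2) :
    ∃ z : ℂ, z.im ≠ 0 ∧ ‖z‖ = 1 ∧ z + conj z = s := by
  have hpos : 0 < 4 - s ^ 2 := by nlinarith [abs_lt.1 hs, sq_abs s]
  refine ⟨⟨s / 2, √(4 - s ^ 2) / 2⟩, ?_, ?_, ?_⟩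
  · simpa using (Real.sqrt_pos.2 hpos).ne'
  · rw [Complex.norm_eq_sqrt_sq_add_sq, Real.sqrt_eq_one]
    linear_combination (1 / 4 : ℝ) * Real.sq_sqrt hpos.le
  · rw [Complex.add_conj]
    push_cast
    ring

end ReciprocalQuadratic

section Traces

variable {t d : ℝ}

theorem two_lt_add_div_two (ht : 2 < t) (hd : d ^ 2 = (t - 4) * t + 8) (hd0 : 0 ≤ d) :
    2 < (t + d) / 2 := by
  nlinarith

theorem abs_sub_div_two_lt_two (ht : 2 < t) (hd : d ^ 2 = (t - 4) * t + 8) (hd0 : 0 ≤ d) :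
    |(t - d) / 2| < 2 := by
  rw [abs_lt]
  constructor <;> nlinarith

theorem salem_formula_eq_add_sqrt_sq_sub_four_div_two (hd : d ^ 2 = (t - 4) * t + 8) :
    (1 / 4) * (t + d + √2 * √(t * (t + d - 2) - 4)) =
      ((t + d) / 2 + √(((t + d) / 2) ^ 2 - 4)) / 2 := by
  have hinner : t * (t + d - 2) - 4 = 2 * (((t + d) / 2) ^ 2 - 4) := by
    linear_combination (-1 / 2 : ℝ) * hd
  rw [hinner, Real.sqrt_mul zero_le_two, ← mul_assoc, Real.mul_self_sqrt zero_le_two]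
  ring

end Traces

theorem salem_root_explicit_formula
    (t : ℤ) (ht : 6 ≤ t) (α : ℝ)
    (hαdef : α = (1 / 4) * ((t : ℝ) + Real.sqrt (((t : ℝ) - 4) * (t : ℝ) + 8) +
      Real.sqrt 2 *
        Real.sqrt ((t : ℝ) * ((t : ℝ) + Real.sqrt (((t : ℝ) - 4) * (t : ℝ) + 8) - 2) - 4))) :
    α ^ 4 - (t : ℝ) * α ^ 3 + (t : ℝ) * α ^ 2 - (t : ℝ) * α + 1 = 0 ∧ 1 < α ∧
      ∃ z : ℂ, z.im ≠ 0 ∧ ‖z‖ = 1 ∧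
        ((X ^ 4 - C (t : ℂ) * X ^ 3 + C (t : ℂ) * X ^ 2 - C (t : ℂ) * X + 1 : ℂ[X]).roots =
          {(α : ℂ), ((α⁻¹ : ℝ) : ℂ), z, (starRingEnd ℂ) z}) := by
  have ht2 : (2 : ℝ) < t := by exact_mod_cast (by omega : 2 < t)
  set d := √(((t : ℝ) - 4) * t + 8)
  have hd : d ^ 2 = ((t : ℝ) - 4) * t + 8 := Real.sq_sqrt (by nlinarith)
  have hd0 : 0 ≤ d := Real.sqrt_nonneg _
  set s := ((t : ℝ) + d) / 2
  set s' := ((t : ℝ) - d) / 2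
  have hsum : s + s' = t := by ring
  have hprod : s * s' + 2 = t := by linear_combination (-1 / 4 : ℝ) * hd
  have hs : 2 < s := two_lt_add_div_two ht2 hd hd0
  rw [salem_formula_eq_add_sqrt_sq_sub_four_div_two hd] at hαdef
  have hroot : α ^ 2 - s * α + 1 = 0 :=
    sq_sub_mul_add_one_eq_zero_of_eq_add_sqrt (by nlinarith) hαdef
  have hα : α + α⁻¹ = s := add_inv_eq_of_sq_sub_mul_add_one_eq_zero hroot
  have hα1 : 1 < α := hαdef ▸ one_lt_add_sqrt_sq_sub_four_div_two hs
  obtain ⟨z, hz_im, hz_norm, hz_sum⟩ :=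
    exists_norm_eq_one_add_conj_eq (abs_sub_div_two_lt_two ht2 hd hd0)
  refine ⟨?_, hα1, z, hz_im, hz_norm, ?_⟩
  · have hquartic := reciprocal_quartic_eq_mul α s s'
    rwa [hsum, hprod, hroot, zero_mul] at hquartic
  · refine roots_reciprocal_quartic ?_ ?_ ?_ ?_
    · rw [← Complex.ofReal_mul, mul_inv_cancel₀ (zero_lt_one.trans hα1).ne', Complex.ofReal_one]
    · rw [Complex.mul_conj', hz_norm]
      norm_num
    · rw [hz_sum, ← Complex.ofReal_add, hα]
      exact_mod_cast hsum
    · rw [hz_sum, ← Complex.ofReal_add, hα]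
      exact_mod_cast hprod
end

section
/- The integer sequence u defined by u_1 = 1, u_2 = 6, u_3 = 29, u_4 = 144 and u_{n+4} = 6 u_{n+3} - 6 u_{n+2} + 6 u_{n+1} - u_n (with u_0 = 0) is a divisibility sequence: m | n implies u_m | u_n. -/
/-!
The characteristic polynomial factors over `ℤ[√5]` as
`(x² - (3 + √5) x + 1) (x² - (3 - √5) x + 1)`. Hence `uₙ` is the `√5`-coordinate of
`Vₙ = Cₙ(3 + √5)`, where `Cₙ` is the Chebyshev polynomial with `Cₙ(γ + γ⁻¹) = γⁿ + γ⁻ⁿ`.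
Since `C_{mk} = C_k ∘ C_m`, `V_{mk}` is an integer polynomial in `V_m`; and the `√5`-coordinates
of all `p(z)`, `p ∈ ℤ[X]`, are divisible by that of `z`, because `{a + b√5 : c ∣ b}` is a subring.
-/

open Polynomial

theorem LinearRecurrence.eq_of_isSolution_of_eq_init {R : Type*} [CommSemiring R]
    (E : LinearRecurrence R) {u v : ℕ → R} (hu : E.IsSolution u) (hv : E.IsSolution v)
    (h : ∀ i : Fin E.order, u i = v i) : u = v := by
  funext n
  rw [E.eq_mk_of_is_sol_of_eq_init hu h, E.eq_mk_of_is_sol_of_eq_init hv fun _ ↦ rfl]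

/-- The order-four recurrence comes from the factorisation
`(x² - s x + 1) (x² - (a - s) x + 1) = x⁴ - a x³ + (2 + b) x² - a x + 1`. -/
theorem add_four_eq_of_add_two_eq {R : Type*} [CommRing R] {w : ℕ → R} {s a b : R}
    (hs : s ^ 2 - a * s + b = 0) (hw : ∀ n, w (n + 2) = s * w (n + 1) - w n) (n : ℕ) :
    w (n + 4) = a * w (n + 3) - (2 + b) * w (n + 2) + a * w (n + 1) - w n := by
  have h3 : w (n + 3) = s * w (n + 2) - w (n + 1) := hw (n + 1)
  have h4 : w (n + 4) = s * w (n + 3) - w (n + 2) := hw (n + 2)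
  linear_combination h4 + (s - a) * h3 + hw n + w (n + 2) * hs

namespace Zsqrtd

variable {d : ℤ}

theorem im_dvd_im_aeval (z : ℤ√d) (p : ℤ[X]) : z.im ∣ (aeval z p).im := by
  induction p using Polynomial.induction_on with
  | C a => simp
  | add p q hp hq => simpa only [map_add, im_add] using dvd_add hp hq
  | monomial n a ih =>
    rw [pow_succ, ← mul_assoc, map_mul, aeval_X, im_mul]
    exact dvd_add (dvd_mul_left _ _) (dvd_mul_of_dvd_left ih _)

theorem im_aeval_chebyshevC_dvd (z : ℤ√d) {m n : ℤ} (h : m ∣ n) :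
    (aeval z (Chebyshev.C ℤ m)).im ∣ (aeval z (Chebyshev.C ℤ n)).im := by
  obtain ⟨k, rfl⟩ := h
  rw [mul_comm, Chebyshev.C_mul, aeval_comp]
  exact im_dvd_im_aeval _ _

end Zsqrtd

/-- `γⁿ + γ⁻ⁿ` for `γ + γ⁻¹ = 3 + √5`. -/
noncomputable def salemTrace (n : ℕ) : ℤ√5 := aeval (⟨3, 1⟩ : ℤ√5) (Chebyshev.C ℤ n)

theorem salemTrace_add_two (n : ℕ) :
    salemTrace (n + 2) = ⟨3, 1⟩ * salemTrace (n + 1) - salemTrace n := by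
  simp only [salemTrace]
  push_cast
  rw [Chebyshev.C_add_two]
  simp

theorem salemTrace_add_four (n : ℕ) :
    salemTrace (n + 4) = 6 * salemTrace (n + 3) - 6 * salemTrace (n + 2)
      + 6 * salemTrace (n + 1) - salemTrace n := by
  convert add_four_eq_of_add_two_eq (a := 6) (b := 4) (by decide) salemTrace_add_two n using 3
  norm_num

theorem im_salemTrace_init :
    (fun i : Fin 4 ↦ (salemTrace i).im) = ![0, 1, 6, 29] := by
  have h0 : salemTrace 0 = 2 := by simp [salemTrace, map_ofNat]
  have h1 : salemTrace 1 = ⟨3, 1⟩ := by simp [salemTrace]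
  have h2 := salemTrace_add_two 0
  have h3 := salemTrace_add_two 1
  rw [h0, h1] at h2
  rw [h2, h1] at h3
  ext i
  fin_cases i <;> simp [h0, h1, h2, h3]

def salemRecurrence : LinearRecurrence ℤ := ⟨4, ![-1, 6, -6, 6]⟩

theorem salemRecurrence_isSolution_iff (u : ℕ → ℤ) : salemRecurrence.IsSolution u ↔
    ∀ n, u (n + 4) = 6 * u (n + 3) - 6 * u (n + 2) + 6 * u (n + 1) - u n := by
  show (∀ n, u (n + 4) = ∑ i : Fin 4, ![-1, 6, -6, 6] i * u (n + i)) ↔ _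
  refine forall_congr' fun n ↦ ?_
  simp only [Fin.sum_univ_four, Fin.isValue, Matrix.cons_val, Fin.val_zero, Fin.val_one, Fin.val_two]
  constructor <;> intro h <;> linear_combination h

theorem salemRecurrence_isSolution_im_salemTrace :
    salemRecurrence.IsSolution fun n ↦ (salemTrace n).im := by
  rw [salemRecurrence_isSolution_iff]
  intro n
  simp [salemTrace_add_four n, Zsqrtd.im_mul]

theorem salem_t6_divisibility_sequence_general
    (u : ℕ → ℤ)
    (hu0 : u 0 = 0) (hu1 : u 1 = 1) (hu2 : u 2 = 6) (hu3 : u 3 = 29)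
    (hurec : ∀ n, u (n + 4) = 6 * u (n + 3) - 6 * u (n + 2) + 6 * u (n + 1) - u n) :
    ∀ m n : ℕ, m ∣ n → u m ∣ u n := by
  have hu : u = fun n ↦ (salemTrace n).im := by
    refine salemRecurrence.eq_of_isSolution_of_eq_init
      ((salemRecurrence_isSolution_iff u).2 hurec) salemRecurrence_isSolution_im_salemTrace
      fun i ↦ ?_
    change Fin 4 at i
    rw [congrFun im_salemTrace_init i]
    fin_cases i <;> simp [hu0, hu1, hu2, hu3]
  intro m n hmn
  rw [hu]
  exact Zsqrtd.im_aeval_chebyshevC_dvd _ (Int.natCast_dvd_natCast.2 hmn)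

theorem salem_t6_divisibility_sequence
    (u : ℕ → ℤ)
    (hu0 : u 0 = 0) (hu1 : u 1 = 1) (hu2 : u 2 = 6) (hu3 : u 3 = 29) (hu4 : u 4 = 144)
    (hurec : ∀ n, u (n + 4) = 6 * u (n + 3) - 6 * u (n + 2) + 6 * u (n + 1) - u n) :
    ∀ m n : ℕ, m ∣ n → u m ∣ u n :=
  salem_t6_divisibility_sequence_general u hu0 hu1 hu2 hu3 hurec
end
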